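/- Let G be a finitely generated group and let H ≤ G be a stable subgroup. Then H is a hyperbolic group, i.e., H is finitely generated and the Cayley graph of H with respect to a finite generating set is Gromov hyperbolic. -/

import Mathlib

open Set

/-- The word length of `g` with respect to a (symmetrised) generating set `S`. -/
noncomputable def wordLength {G : Type*} [Group G] (S : Set G) (g : G) : ℕ :=
  sInf {n | ∃ l : List G, (∀ x ∈ l, x ∈ S ∨ x⁻¹ ∈ S) ∧ l.length = n ∧ l.prod = g}

/-- The word metric on `G` with respect to `S` (the vertex metric of `Cay(G,S)`). -/
noncomputable def wordDist {G : Type*} [Group G] (S : Set G) (g h : G) : ℝ :=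
  (wordLength S (g⁻¹ * h) : ℝ)

/-- `S` is a finite generating set of `G`. -/
def IsFinGenSet {G : Type*} [Group G] (S : Set G) : Prop :=
  S.Finite ∧ Subgroup.closure S = ⊤

/-- A Morse gauge: a non-negative function `ℝ≥1 × ℝ≥0 → ℝ≥0`, non-decreasing in
both variables. -/
def IsMorseGauge (M : ℝ → ℝ → ℝ) : Prop :=
  (∀ l c : ℝ, 1 ≤ l → 0 ≤ c → 0 ≤ M l c) ∧
  (∀ l₁ c₁ l₂ c₂ : ℝ, 1 ≤ l₁ → 0 ≤ c₁ → l₁ ≤ l₂ → c₁ ≤ c₂ → M l₁ c₁ ≤ M l₂ c₂)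

/-- `γ` is a `(lam, c)`-quasigeodesic on the set of parameters `I`, with respect to the
distance function `d`. -/
def IsQuasigeodesicOn {X : Type*} (d : X → X → ℝ) (γ : ℝ → X) (I : Set ℝ)
    (lam c : ℝ) : Prop :=
  ∀ s ∈ I, ∀ t ∈ I, |s - t| / lam - c ≤ d (γ s) (γ t) ∧ d (γ s) (γ t) ≤ lam * |s - t| + c

/-- `γ` is a geodesic (parametrised by arclength) on the set of parameters `I`. -/
def IsGeodesicOn {X : Type*} (d : X → X → ℝ) (γ : ℝ → X) (I : Set ℝ) : Prop :=
  ∀ s ∈ I, ∀ t ∈ I, d (γ s) (γ t) = |s - t|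

/-- The Hausdorff distance between `A` and `B` (w.r.t. the distance function `d`)
is at most `r`. -/
def HausdorffLE {X : Type*} (d : X → X → ℝ) (A B : Set X) (r : ℝ) : Prop :=
  (∀ a ∈ A, ∃ b ∈ B, d a b ≤ r) ∧ (∀ b ∈ B, ∃ a ∈ A, d a b ≤ r)

/-- `γ` is `M`-Morse on the parameter interval `I`: any `(lam,c)`-quasigeodesic with
endpoints on `γ` stays within Hausdorff distance `M lam c` of the corresponding
segment of `γ`. -/
def IsMorseOn {X : Type*} (d : X → X → ℝ) (γ : ℝ → X) (I : Set ℝ)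
    (M : ℝ → ℝ → ℝ) : Prop :=
  ∀ lam c : ℝ, 1 ≤ lam → 0 ≤ c → ∀ t₁ ∈ I, ∀ t₂ ∈ I, t₁ ≤ t₂ →
    ∀ (η : ℝ → X) (a b : ℝ), a ≤ b → IsQuasigeodesicOn d η (Icc a b) lam c →
      η a = γ t₁ → η b = γ t₂ →
      HausdorffLE d (γ '' Icc t₁ t₂) (η '' Icc a b) (M lam c)

/-- `γ` is an `(M; lam, c)`-Morse quasigeodesic on `I`. -/
def IsMorseQuasigeodesicOn {X : Type*} (d : X → X → ℝ) (γ : ℝ → X) (I : Set ℝ)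
    (M : ℝ → ℝ → ℝ) (lam c : ℝ) : Prop :=
  IsQuasigeodesicOn d γ I lam c ∧ IsMorseOn d γ I M

/-- The Morse local-to-global property for the space `X` with distance function `d`:
local Morse quasigeodesics (at a sufficiently large scale) are global Morse
quasigeodesics. -/
def MorseLocalToGlobal {X : Type*} (d : X → X → ℝ) : Prop :=
  ∀ M : ℝ → ℝ → ℝ, IsMorseGauge M → ∀ lam c : ℝ, 1 ≤ lam → 0 ≤ c →
    ∃ L > (0 : ℝ), ∃ M' : ℝ → ℝ → ℝ, IsMorseGauge M' ∧ ∃ lam' ≥ (1 : ℝ), ∃ c' ≥ (0 : ℝ),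
      ∀ (γ : ℝ → X) (a b : ℝ), a ≤ b →
        (∀ t₁ t₂ : ℝ, a ≤ t₁ → t₁ ≤ t₂ → t₂ ≤ b → t₂ - t₁ ≤ L →
          IsMorseQuasigeodesicOn d γ (Icc t₁ t₂) M lam c) →
        IsMorseQuasigeodesicOn d γ (Icc a b) M' lam' c'

/-- A discrete geodesic of length `n` in the Cayley graph of `(G,S)`. -/
def IsGeodesicSeq {G : Type*} [Group G] (S : Set G) (γ : ℕ → G) (n : ℕ) : Prop :=
  ∀ i ≤ n, ∀ j ≤ n, wordDist S (γ i) (γ j) = |(i : ℝ) - (j : ℝ)|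

/-- A discrete path in the Cayley graph of `(G,S)` is `M`-Morse. -/
def IsMorseSeq {G : Type*} [Group G] (S : Set G) (γ : ℕ → G) (n : ℕ)
    (M : ℝ → ℝ → ℝ) : Prop :=
  ∀ lam c : ℝ, 1 ≤ lam → 0 ≤ c → ∀ i j : ℕ, i ≤ j → j ≤ n →
    ∀ (η : ℝ → G) (a b : ℝ), a ≤ b →
      IsQuasigeodesicOn (wordDist S) η (Icc a b) lam c →
      η a = γ i → η b = γ j →
      HausdorffLE (wordDist S) (γ '' {k : ℕ | i ≤ k ∧ k ≤ j}) (η '' Icc a b) (M lam c)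

/-- `H` is an `(M,μ)`-stable subgroup of `G` with respect to the finite generating set
`S`: every geodesic of `Cay(G,S)` with endpoints in `H` is `M`-Morse and lies in the
`μ`-neighbourhood of `H`. -/
def IsStableSubgroupWith {G : Type*} [Group G] (S : Set G) (H : Subgroup G)
    (M : ℝ → ℝ → ℝ) (μ : ℝ) : Prop :=
  IsMorseGauge M ∧ 0 ≤ μ ∧
  ∀ (γ : ℕ → G) (n : ℕ), IsGeodesicSeq S γ n → γ 0 ∈ H → γ n ∈ H →
    IsMorseSeq S γ n M ∧ ∀ i ≤ n, ∃ h ∈ H, wordDist S (γ i) h ≤ μ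

/-- `H` is a stable subgroup of `G` (this is independent of the choice of finite
generating set). -/
def IsStableSubgroup {G : Type*} [Group G] (H : Subgroup G) : Prop :=
  ∃ S : Set G, IsFinGenSet S ∧ ∃ (M : ℝ → ℝ → ℝ) (μ : ℝ), IsStableSubgroupWith S H M μ

/-- A finitely generated group has the Morse local-to-global property if its Cayley
graph with respect to a finite generating set does. -/
def HasMLTG (G : Type*) [Group G] : Prop :=
  ∃ S : Set G, IsFinGenSet S ∧ MorseLocalToGlobal (wordDist S)

/-- A subset `U` of a group `G` is separable if it is closed in the profinite topology:
for every `g ∉ U` there is a finite-index subgroup `N` with `gN ∩ U = ∅`. -/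
def SeparableSubset {G : Type*} [Group G] (U : Set G) : Prop :=
  ∀ g : G, g ∉ U → ∃ N : Subgroup G, N.FiniteIndex ∧ ∀ h ∈ N, g * h ∉ U

/-- The setwise (ordered) product of a finite family of subsets of a group. -/
def setProd {G : Type*} [Group G] {n : ℕ} (A : Fin n → Set G) : Set G :=
  {g : G | ∃ x : Fin n → G, (∀ i, x i ∈ A i) ∧ (List.ofFn x).prod = g}

/-- The Gromov product `⟨x,y⟩_z` with respect to the distance function `d`. -/
noncomputable def gromovProd {X : Type*} (d : X → X → ℝ) (z x y : X) : ℝ :=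
  (d z x + d z y - d x y) / 2

/-- A geodesic metric space: any two points are joined by a geodesic. -/
def IsGeodesicSpace (X : Type*) [MetricSpace X] : Prop :=
  ∀ x y : X, ∃ γ : ℝ → X, γ 0 = x ∧ γ (dist x y) = y ∧
    IsGeodesicOn dist γ (Icc 0 (dist x y))

/-- A subgroup `H ≤ G` is undistorted: for any finite generating sets `T` of `H` and
`S` of `G`, the inclusion `(H,d_T) → (G,d_S)` is a quasi-isometric embedding. -/
def Undistorted {G : Type*} [Group G] (H : Subgroup G) : Prop :=
  ∀ (T : Set H) (S : Set G), IsFinGenSet T → IsFinGenSet S →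
    ∃ lam ≥ (1 : ℝ), ∃ c ≥ (0 : ℝ), ∀ x y : H,
      wordDist S (x : G) (y : G) / lam - c ≤ wordDist T x y ∧
      wordDist T x y ≤ lam * wordDist S (x : G) (y : G) + c

/-- A finitely generated group is hyperbolic: the Gromov product on
a Cayley graph with respect to a finite generating set satisfies the
`δ`-hyperbolicity inequality. -/
def IsHyperbolicGroup (G : Type*) [Group G] : Prop :=
  Group.FG G ∧ ∃ S : Set G, IsFinGenSet S ∧ ∃ δ ≥ (0 : ℝ), ∀ x y z w : G,
    min (gromovProd (wordDist S) w x z) (gromovProd (wordDist S) w z y) - δ ≤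
      gromovProd (wordDist S) w x y


section Basics
variable {G : Type*} [Group G] {S : Set G}

/-- The set of word-witnesses. -/
def wordSet (S : Set G) (g : G) : Set ℕ :=
  {n | ∃ l : List G, (∀ x ∈ l, x ∈ S ∨ x⁻¹ ∈ S) ∧ l.length = n ∧ l.prod = g}

lemma wordSet_nonempty (hS : Subgroup.closure S = ⊤) (g : G) :
    (wordSet S g).Nonempty := by
  have hg : g ∈ Subgroup.closure S := by rw [hS]; trivial
  have hg' : g ∈ (Subgroup.closure S).toSubmonoid := hg
  rw [Subgroup.closure_toSubmonoid] at hg'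
  obtain ⟨l, hl, hprod⟩ := Submonoid.exists_list_of_mem_closure hg'
  refine ⟨l.length, l, fun x hx => ?_, rfl, hprod⟩
  rcases hl x hx with h | h
  · exact Or.inl h
  · exact Or.inr (Set.mem_inv.mp h)

lemma wordLength_eq_sInf : wordLength S g = sInf (wordSet S g) := rfl

lemma wordLength_spec (hS : Subgroup.closure S = ⊤) (g : G) :
    ∃ l : List G, (∀ x ∈ l, x ∈ S ∨ x⁻¹ ∈ S) ∧ l.length = wordLength S g ∧ l.prod = g :=
  Nat.sInf_mem (wordSet_nonempty hS g)

lemma wordLength_le {g : G} {l : List G} (hl : ∀ x ∈ l, x ∈ S ∨ x⁻¹ ∈ S)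
    (hprod : l.prod = g) : wordLength S g ≤ l.length :=
  Nat.sInf_le ⟨l, hl, rfl, hprod⟩

lemma wordLength_one : wordLength S (1 : G) = 0 :=
  Nat.le_zero.mp (wordLength_le (l := []) (by simp) (by simp))

lemma wordLength_eq_zero (hS : Subgroup.closure S = ⊤) {g : G}
    (h : wordLength S g = 0) : g = 1 := by
  obtain ⟨l, _, hlen, hprod⟩ := wordLength_spec hS g
  rw [h, List.length_eq_zero_iff] at hlen
  rw [hlen] at hprod; simpa using hprod.symm

lemma wordLength_mul_le (hS : Subgroup.closure S = ⊤) (g h : G) :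
    wordLength S (g * h) ≤ wordLength S g + wordLength S h := by
  obtain ⟨l₁, h₁, hlen₁, hp₁⟩ := wordLength_spec hS g
  obtain ⟨l₂, h₂, hlen₂, hp₂⟩ := wordLength_spec hS h
  have := wordLength_le (S := S) (g := g * h) (l := l₁ ++ l₂)
    (by intro x hx; rcases List.mem_append.mp hx with hx | hx
        exacts [h₁ x hx, h₂ x hx])
    (by rw [List.prod_append, hp₁, hp₂])
  simpa [hlen₁, hlen₂] using this

lemma wordLength_inv_le (hS : Subgroup.closure S = ⊤) (g : G) :
    wordLength S g⁻¹ ≤ wordLength S g := by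
  obtain ⟨l, hl, hlen, hp⟩ := wordLength_spec hS g
  have := wordLength_le (S := S) (g := g⁻¹) (l := (l.map fun x => x⁻¹).reverse)
    (by intro x hx
        simp only [List.mem_reverse, List.mem_map] at hx
        obtain ⟨y, hy, rfl⟩ := hx
        rcases hl y hy with h | h
        · exact Or.inr (by simpa using h)
        · exact Or.inl h)
    (by rw [← List.prod_inv_reverse, hp])
  simpa [hlen] using this

lemma wordLength_inv (hS : Subgroup.closure S = ⊤) (g : G) :
    wordLength S g⁻¹ = wordLength S g :=
  le_antisymm (wordLength_inv_le hS g) (by simpa using wordLength_inv_le hS g⁻¹)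

end Basics
section Dist
variable {G : Type*} [Group G] {S : Set G}

lemma wordDist_eq (x y : G) : wordDist S x y = (wordLength S (x⁻¹ * y) : ℝ) := rfl

lemma wordDist_nonneg (x y : G) : 0 ≤ wordDist S x y := Nat.cast_nonneg _

lemma wordDist_self (x : G) : wordDist S x x = 0 := by
  simp [wordDist_eq, wordLength_one]

lemma wordDist_symm (hS : Subgroup.closure S = ⊤) (x y : G) :
    wordDist S x y = wordDist S y x := by
  have : (x⁻¹ * y)⁻¹ = y⁻¹ * x := by group
  rw [wordDist_eq, wordDist_eq, ← this, wordLength_inv hS]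

lemma wordDist_triangle (hS : Subgroup.closure S = ⊤) (x y z : G) :
    wordDist S x z ≤ wordDist S x y + wordDist S y z := by
  have h : x⁻¹ * z = (x⁻¹ * y) * (y⁻¹ * z) := by group
  rw [wordDist_eq, wordDist_eq, wordDist_eq, h]
  exact_mod_cast wordLength_mul_le hS _ _

lemma wordDist_eq_zero (hS : Subgroup.closure S = ⊤) {x y : G}
    (h : wordDist S x y = 0) : x = y := by
  rw [wordDist_eq] at h
  have := wordLength_eq_zero hS (g := x⁻¹ * y) (by exact_mod_cast h)
  have := inv_mul_eq_one.mp this; exact this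

/-- Geodesic sequences exist. -/
lemma exists_geodesicSeq (hS : Subgroup.closure S = ⊤) (x y : G) :
    ∃ γ : ℕ → G, γ 0 = x ∧ γ (wordLength S (x⁻¹ * y)) = y ∧
      IsGeodesicSeq S γ (wordLength S (x⁻¹ * y)) := by
  obtain ⟨l, hl, hlen, hp⟩ := wordLength_spec hS (x⁻¹ * y)
  set n := wordLength S (x⁻¹ * y) with hn
  refine ⟨fun i => x * (l.take i).prod, by simp, ?_, ?_⟩
  · simp only [List.take_of_length_le (le_of_eq hlen)]
    rw [hp]; group
  · -- first, the ≤ direction for i ≤ j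
    have key : ∀ i j : ℕ, i ≤ j → j ≤ n →
        wordLength S ((x * (l.take i).prod)⁻¹ * (x * (l.take j).prod)) ≤ j - i := by
      intro i j hij hjn
      have hprod : ((l.take i).prod)⁻¹ * (l.take j).prod = ((l.drop i).take (j - i)).prod := by
        have h1 : l.take j = l.take i ++ ((l.drop i).take (j - i)) := by
          rw [← List.take_add]; congr 1; omega
        rw [h1, List.prod_append]; group
      have hmem : ∀ z ∈ (l.drop i).take (j - i), z ∈ S ∨ z⁻¹ ∈ S := by
        intro z hz
        exact hl z (List.mem_of_mem_drop (List.mem_of_mem_take hz))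
      have hlen2 : ((l.drop i).take (j - i)).length ≤ j - i := by
        simpa using List.length_take_le _ _
      calc wordLength S ((x * (l.take i).prod)⁻¹ * (x * (l.take j).prod))
          = wordLength S (((l.take i).prod)⁻¹ * (l.take j).prod) := by
            congr 1; group
        _ ≤ ((l.drop i).take (j - i)).length := by
            rw [hprod]; exact wordLength_le hmem rfl
        _ ≤ j - i := hlen2
    have main : ∀ i j : ℕ, i ≤ j → j ≤ n →
        wordDist S (x * (l.take i).prod) (x * (l.take j).prod) = |(i : ℝ) - (j : ℝ)| := by
      intro i j hij hj
      have hle := key i j hij hj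
      have hge : (j - i : ℕ) ≤ wordLength S ((x * (l.take i).prod)⁻¹ * (x * (l.take j).prod)) := by
        by_contra hcon
        push_neg at hcon
        have h0i := key 0 i (Nat.zero_le _) (hij.trans hj)
        have hjn := key j n hj le_rfl
        have hnn : (l.take n).prod = x⁻¹ * y := by
          rw [List.take_of_length_le (le_of_eq hlen), hp]
        have : wordLength S (x⁻¹ * y) ≤ (i - 0) + ((j - i) - 1) + (n - j) := by
          calc wordLength S (x⁻¹ * y)
              = wordLength S ((x * (l.take 0).prod)⁻¹ * (x * (l.take n).prod)) := by
                congr 1; rw [hnn, List.take_zero, List.prod_nil, mul_one]; group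
            _ ≤ _ := by
                have t1 := wordLength_mul_le hS
                  ((x * (l.take 0).prod)⁻¹ * (x * (l.take i).prod))
                  ((x * (l.take i).prod)⁻¹ * (x * (l.take n).prod))
                have t2 := wordLength_mul_le hS
                  ((x * (l.take i).prod)⁻¹ * (x * (l.take j).prod))
                  ((x * (l.take j).prod)⁻¹ * (x * (l.take n).prod))
                have e1 : (x * (l.take 0).prod)⁻¹ * (x * (l.take n).prod)
                    = ((x * (l.take 0).prod)⁻¹ * (x * (l.take i).prod))
                      * ((x * (l.take i).prod)⁻¹ * (x * (l.take n).prod)) := by group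
                have e2 : (x * (l.take i).prod)⁻¹ * (x * (l.take n).prod)
                    = ((x * (l.take i).prod)⁻¹ * (x * (l.take j).prod))
                      * ((x * (l.take j).prod)⁻¹ * (x * (l.take n).prod)) := by group
                rw [e1]
                refine le_trans t1 ?_
                have : wordLength S ((x * (l.take i).prod)⁻¹ * (x * (l.take n).prod))
                    ≤ ((j - i) - 1) + (n - j) := by
                  rw [e2]
                  refine le_trans t2 (Nat.add_le_add (Nat.le_sub_one_of_lt hcon) hjn)
                omega
        omega
      rw [wordDist_eq]
      have : wordLength S ((x * (l.take i).prod)⁻¹ * (x * (l.take j).prod)) = j - i :=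
        le_antisymm hle hge
      rw [this]
      rw [Nat.cast_sub hij, abs_sub_comm,
        abs_of_nonneg (sub_nonneg.mpr (by exact_mod_cast hij))]
    intro i hi j hj
    rcases le_total i j with hij | hij
    · exact main i j hij hj
    · rw [wordDist_symm hS, main j i hij hi, abs_sub_comm]
end Dist
section Ball
variable {G : Type*} [Group G] {S : Set G}

lemma ball_finite (hS : Subgroup.closure S = ⊤) (hfin : S.Finite) (n : ℕ) :
    {g : G | wordLength S g ≤ n}.Finite := by
  classical
  have hA : (S ∪ S⁻¹).Finite := hfin.union (Set.Finite.inv hfin)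
  have : Finite ↥(S ∪ S⁻¹) := hA
  have hlists : {l : List ↥(S ∪ S⁻¹) | l.length ≤ n}.Finite := List.finite_length_le _ n
  have himg : {g : G | wordLength S g ≤ n} ⊆
      (fun l : List ↥(S ∪ S⁻¹) => (l.map Subtype.val).prod) '' {l | l.length ≤ n} := by
    intro g hg
    obtain ⟨l, hl, hlen, hp⟩ := wordLength_spec hS g
    have hmem : ∀ x ∈ l, x ∈ S ∪ S⁻¹ := by
      intro x hx; rcases hl x hx with h | h
      · exact Or.inl h
      · exact Or.inr (Set.mem_inv.mpr h)
    refine ⟨l.attach.map fun x => ⟨x.1, hmem x.1 x.2⟩, by simpa [hlen] using hg, ?_⟩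
    show (List.map Subtype.val (List.map (fun x => (⟨x.1, hmem x.1 x.2⟩ : ↥(S ∪ S⁻¹))) l.attach)).prod = g
    rw [List.map_map]
    have h2 : (l.attach.map (Subtype.val ∘ fun x => (⟨x.1, hmem x.1 x.2⟩ : ↥(S ∪ S⁻¹)))) = l := by
      simp [Function.comp]
    rw [h2, hp]
  exact Set.Finite.subset (Set.Finite.image _ hlists) himg

end Ball
section Chain
variable {G : Type*} [Group G] {S : Set G} {H : Subgroup G} {M : ℝ → ℝ → ℝ} {μ : ℝ}

/-- Quasiconvexity chain: between any two points of `H` there is a chain in `H`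
with steps of `S`-length at most `2μ+1`. -/
lemma exists_chain (hS : Subgroup.closure S = ⊤)
    (hStab : IsStableSubgroupWith S H M μ) {x y : G} (hx : x ∈ H) (hy : y ∈ H) :
    ∃ ch : ℕ → G, ch 0 = x ∧ ch (wordLength S (x⁻¹ * y)) = y ∧ (∀ i, ch i ∈ H) ∧
      ∀ i < wordLength S (x⁻¹ * y), wordDist S (ch i) (ch (i + 1)) ≤ 2 * μ + 1 := by
  classical
  obtain ⟨hM, hμ, hmain⟩ := hStab
  obtain ⟨γ, hγ0, hγn, hγ⟩ := exists_geodesicSeq hS x y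
  set n := wordLength S (x⁻¹ * y) with hn
  obtain ⟨-, hnear⟩ := hmain γ n hγ (hγ0 ▸ hx) (hγn ▸ hy)
  choose f hfH hfd using fun i (hi : i ≤ n) => hnear i hi
  set ch : ℕ → G := fun i =>
    if h0 : i = 0 then x else if hn' : n ≤ i then y else f i (le_of_lt (lt_of_not_ge hn')) with hch
  have hchH : ∀ i, ch i ∈ H := by
    intro i; simp only [hch]
    split
    · exact hx
    · split
      · exact hy
      · exact hfH _ _
  have hd : ∀ i ≤ n, wordDist S (γ i) (ch i) ≤ μ := by
    intro i hi
    simp only [hch]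
    split
    · rename_i h; subst h; rw [hγ0, wordDist_self]; exact hμ
    · split
      · rename_i h1 h2; have : i = n := le_antisymm hi h2
        subst this; rw [hγn, wordDist_self]; exact hμ
      · exact hfd _ _
  refine ⟨ch, by simp [hch], ?_, hchH, ?_⟩
  · rcases Nat.eq_zero_or_pos n with h0 | hpos
    · have hxy : x = y := by rw [← hγ0, ← hγn, h0]
      simp [hch, h0, hxy]
    · have : ¬ n = 0 := by omega
      simp [hch, this]
  · intro i hi
    have h1 : wordDist S (γ i) (γ (i + 1)) = 1 := by
      have := hγ i (le_of_lt hi) (i + 1) hi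
      rw [this]; simp
    calc wordDist S (ch i) (ch (i + 1))
        ≤ wordDist S (ch i) (γ i) + wordDist S (γ i) (ch (i + 1)) := wordDist_triangle hS _ _ _
      _ ≤ wordDist S (ch i) (γ i) + (wordDist S (γ i) (γ (i + 1)) + wordDist S (γ (i + 1)) (ch (i + 1))) := by
          have := wordDist_triangle hS (γ i) (γ (i + 1)) (ch (i + 1))
          linarith
      _ ≤ μ + (1 + μ) := by
          have t1 : wordDist S (ch i) (γ i) ≤ μ := by
            rw [wordDist_symm hS]; exact hd i (le_of_lt hi)
          have t2 := hd (i + 1) hi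
          rw [h1]
          linarith
      _ = 2 * μ + 1 := by ring
end Chain
section Tsec
variable {G : Type*} [Group G] {S : Set G} {H : Subgroup G} {M : ℝ → ℝ → ℝ} {μ : ℝ}

/-- The generating set for `H`. -/
def Tset (S : Set G) (H : Subgroup G) (R : ℕ) : Set ↥H :=
  {a : ↥H | wordLength S (a : G) ≤ R}

lemma Tset_finite (hS : Subgroup.closure S = ⊤) (hfin : S.Finite) (R : ℕ) :
    (Tset S H R).Finite := by
  have hball := ball_finite hS hfin (G := G) R
  have : Tset S H R ⊆ (fun a : ↥H => (a : G)) ⁻¹' {g : G | wordLength S g ≤ R} := fun a ha => ha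
  exact Set.Finite.subset (Set.Finite.preimage (Set.injOn_of_injective Subtype.val_injective)
    hball) this

/-- A `T`-word of length `wordLength S (x⁻¹y)` connecting two elements of `H`. -/
lemma exists_T_word (hS : Subgroup.closure S = ⊤)
    (hStab : IsStableSubgroupWith S H M μ) {R : ℕ} (hR : 2 * μ + 1 ≤ (R : ℝ))
    (a b : ↥H) :
    ∃ L : List ↥H, (∀ u ∈ L, u ∈ Tset S H R) ∧
      L.length = wordLength S ((a : G)⁻¹ * (b : G)) ∧ L.prod = a⁻¹ * b := by
  obtain ⟨ch, hch0, hchn, hchH, hstep⟩ := exists_chain hS hStab a.2 b.2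
  set n := wordLength S ((a : G)⁻¹ * (b : G)) with hn
  refine ⟨(List.range n).map (fun i => ⟨(ch i)⁻¹ * ch (i + 1),
    mul_mem (inv_mem (hchH i)) (hchH (i + 1))⟩), ?_, by simp, ?_⟩
  · intro u hu
    simp only [List.mem_map, List.mem_range] at hu
    obtain ⟨i, hi, rfl⟩ := hu
    have := hstep i hi
    rw [wordDist_eq] at this
    have : (wordLength S ((ch i)⁻¹ * ch (i + 1)) : ℝ) ≤ (R : ℝ) := le_trans this hR
    exact_mod_cast this
  · have key : ∀ m ≤ n, ((List.range m).map (fun i => (⟨(ch i)⁻¹ * ch (i + 1),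
        mul_mem (inv_mem (hchH i)) (hchH (i + 1))⟩ : ↥H))).prod
        = ⟨(ch 0)⁻¹ * ch m, mul_mem (inv_mem (hchH 0)) (hchH m)⟩ := by
      intro m hm
      induction m with
      | zero => simp; rfl
      | succ k ih =>
          rw [List.range_succ, List.map_append, List.prod_append, ih (by omega)]
          ext
          push_cast
          simp only [List.map_cons, List.map_nil, List.prod_cons, List.prod_nil, mul_one]
          group
    have := key n le_rfl
    rw [this]
    ext
    push_cast
    rw [hch0, hchn]

lemma Tset_closure (hS : Subgroup.closure S = ⊤)
    (hStab : IsStableSubgroupWith S H M μ) {R : ℕ} (hR : 2 * μ + 1 ≤ (R : ℝ)) :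
    Subgroup.closure (Tset S H R) = ⊤ := by
  rw [eq_top_iff]
  intro a _
  obtain ⟨L, hLT, -, hLp⟩ := exists_T_word hS hStab hR 1 a
  have : L.prod ∈ Subgroup.closure (Tset S H R) :=
    list_prod_mem fun u hu => Subgroup.subset_closure (hLT u hu)
  rw [hLp] at this
  simpa using this

lemma dT_le_dS (hS : Subgroup.closure S = ⊤)
    (hStab : IsStableSubgroupWith S H M μ) {R : ℕ} (hR : 2 * μ + 1 ≤ (R : ℝ))
    (a b : ↥H) :
    wordDist (Tset S H R) a b ≤ wordDist S (a : G) (b : G) := by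
  obtain ⟨L, hLT, hLlen, hLp⟩ := exists_T_word hS hStab hR a b
  rw [wordDist_eq, wordDist_eq]
  have := wordLength_le (S := Tset S H R) (g := a⁻¹ * b) (l := L)
    (fun u hu => Or.inl (hLT u hu)) hLp
  rw [hLlen] at this
  exact_mod_cast this

lemma wl_coe_le (hS : Subgroup.closure S = ⊤) {R : ℕ} :
    ∀ L : List ↥H, (∀ u ∈ L, u ∈ Tset S H R ∨ u⁻¹ ∈ Tset S H R) →
      wordLength S ((L.prod : ↥H) : G) ≤ R * L.length := by
  intro L
  induction L with
  | nil => intro _; simp [wordLength_one]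
  | cons u L' ih =>
      intro hmem
      have h1 : wordLength S ((u : G)) ≤ R := by
        rcases hmem u (by simp) with h | h
        · exact h
        · have : wordLength S (((u⁻¹ : ↥H) : G)) ≤ R := h
          calc wordLength S ((u : G)) = wordLength S (((u⁻¹ : ↥H) : G))⁻¹ := by
                congr 1; simp
            _ = wordLength S (((u⁻¹ : ↥H) : G)) := wordLength_inv hS _
            _ ≤ R := h
      have h2 := ih (fun v hv => hmem v (by simp [hv]))
      have h3 : ((((u :: L').prod : ↥H)) : G) = (u : G) * ((L'.prod : ↥H) : G) := by
        push_cast; rfl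
      calc wordLength S ((((u :: L').prod : ↥H)) : G)
          ≤ wordLength S ((u : G)) + wordLength S ((L'.prod : ↥H) : G) := by
            rw [h3]; exact wordLength_mul_le hS _ _
        _ ≤ R + R * L'.length := Nat.add_le_add h1 h2
        _ = R * (u :: L').length := by simp [List.length_cons]; ring
      
lemma dS_le_R_dT (hS : Subgroup.closure S = ⊤) {R : ℕ}
    (hT : Subgroup.closure (Tset S H R) = ⊤)
    (a b : ↥H) :
    wordDist S (a : G) (b : G) ≤ (R : ℝ) * wordDist (Tset S H R) a b := by
  obtain ⟨L, hLT, hLlen, hLp⟩ := wordLength_spec hT (a⁻¹ * b)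
  have := wl_coe_le (H := H) (R := R) hS L hLT
  rw [hLp] at this
  have hco : (((a⁻¹ * b : ↥H)) : G) = (a : G)⁻¹ * (b : G) := by push_cast; rfl
  rw [hco] at this
  rw [wordDist_eq, wordDist_eq]
  rw [hLlen] at this
  exact_mod_cast this

end Tsec
section Interp
open Set

/-- Discrete quasigeodesic sequence. -/
def QGSeq {X : Type*} (d : X → X → ℝ) (σ : ℕ → X) (m : ℕ) (lam c : ℝ) : Prop :=
  ∀ i ≤ m, ∀ j ≤ m,
    |(i : ℝ) - (j : ℝ)| / lam - c ≤ d (σ i) (σ j) ∧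
      d (σ i) (σ j) ≤ lam * |(i : ℝ) - (j : ℝ)| + c

lemma floor_abs_bounds {s t : ℝ} (hs : 0 ≤ s) (ht : 0 ≤ t) :
    |(⌊s⌋₊ : ℝ) - (⌊t⌋₊ : ℝ)| ≤ |s - t| + 1 ∧ |s - t| ≤ |(⌊s⌋₊ : ℝ) - (⌊t⌋₊ : ℝ)| + 1 := by
  have h1 : (⌊s⌋₊ : ℝ) ≤ s := Nat.floor_le hs
  have h2 : s < (⌊s⌋₊ : ℝ) + 1 := Nat.lt_floor_add_one s
  have h3 : (⌊t⌋₊ : ℝ) ≤ t := Nat.floor_le ht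
  have h4 : t < (⌊t⌋₊ : ℝ) + 1 := Nat.lt_floor_add_one t
  constructor <;> (cases abs_cases (s - t) <;>
    cases abs_cases ((⌊s⌋₊ : ℝ) - (⌊t⌋₊ : ℝ)) <;> linarith)

lemma interp_qg {X : Type*} (d : X → X → ℝ) {σ : ℕ → X} {m : ℕ} {lam c : ℝ}
    (hlam : 1 ≤ lam) (h : QGSeq d σ m lam c) :
    IsQuasigeodesicOn d (fun t : ℝ => σ ⌊t⌋₊) (Icc (0 : ℝ) m) lam (c + lam) := by
  intro s hs t ht
  have hs0 : 0 ≤ s := hs.1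
  have ht0 : 0 ≤ t := ht.1
  have hsm : ⌊s⌋₊ ≤ m := by
    have := Nat.floor_le_floor (R := ℝ) hs.2
    simpa using this
  have htm : ⌊t⌋₊ ≤ m := by
    have := Nat.floor_le_floor (R := ℝ) ht.2
    simpa using this
  obtain ⟨hb1, hb2⟩ := floor_abs_bounds hs0 ht0
  obtain ⟨hq1, hq2⟩ := h ⌊s⌋₊ hsm ⌊t⌋₊ htm
  have hlam0 : 0 < lam := lt_of_lt_of_le one_pos hlam
  have hdiv : |s - t| / lam ≤ |(⌊s⌋₊ : ℝ) - (⌊t⌋₊ : ℝ)| / lam + 1 / lam := by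
    rw [← add_div]
    exact (div_le_div_iff_of_pos_right hlam0).mpr hb2
  have hinv : 1 / lam ≤ lam := by
    rw [div_le_iff₀ hlam0]; nlinarith
  constructor
  · linarith
  · nlinarith [abs_nonneg ((⌊s⌋₊ : ℝ) - (⌊t⌋₊ : ℝ)), abs_nonneg (s - t)]

lemma interp_image {X : Type*} (σ : ℕ → X) (m : ℕ) :
    (fun t : ℝ => σ ⌊t⌋₊) '' Icc (0 : ℝ) m = σ '' {k : ℕ | k ≤ m} := by
  ext x
  constructor
  · rintro ⟨t, ht, rfl⟩
    exact ⟨⌊t⌋₊, by simpa using Nat.floor_le_floor (R := ℝ) ht.2, rfl⟩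
  · rintro ⟨k, hk, rfl⟩
    exact ⟨(k : ℝ), ⟨Nat.cast_nonneg _, Nat.cast_le.mpr hk⟩, by simp⟩

end Interp
section L1
open Set
variable {G : Type*} [Group G] {S : Set G} {H : Subgroup G} {M : ℝ → ℝ → ℝ} {μ : ℝ}

/-- The stability constant used for `(lam, c)` quasigeodesic sequences in `(H, d_T)`. -/
noncomputable def Kconst (M : ℝ → ℝ → ℝ) (R : ℕ) (lam c : ℝ) : ℝ :=
  M R (0 + R) + M (R * lam) (R * c + R * lam)

/-- Any `T`-quasigeodesic sequence between two points of `H` is close (in `d_T`)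
to any `T`-geodesic sequence between the same points. -/
lemma qg_near_geodesic (hS : Subgroup.closure S = ⊤)
    (hStab : IsStableSubgroupWith S H M μ) {R : ℕ} (hR : 2 * μ + 1 ≤ (R : ℝ))
    (hT : Subgroup.closure (Tset S H R) = ⊤)
    {lam c : ℝ} (hlam : 1 ≤ lam) (hc : 0 ≤ c)
    {σ : ℕ → ↥H} {m : ℕ} (hσ : QGSeq (wordDist (Tset S H R)) σ m lam c)
    {g : ℕ → ↥H} {n₁ : ℕ} (hg : IsGeodesicSeq (Tset S H R) g n₁)
    (h0 : g 0 = σ 0) (hn : g n₁ = σ m) :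
    (∀ i ≤ n₁, ∃ j ≤ m, wordDist (Tset S H R) (g i) (σ j) ≤ Kconst M R lam c) ∧
    (∀ j ≤ m, ∃ i ≤ n₁, wordDist (Tset S H R) (g i) (σ j) ≤ Kconst M R lam c) := by
  have hμ : 0 ≤ μ := hStab.2.1
  have hR1 : (1 : ℝ) ≤ R := by linarith
  have hR0 : (0 : ℝ) < R := by linarith
  -- the S-geodesic between the common endpoints
  set a : ↥H := σ 0 with ha
  set b : ↥H := σ m with hb
  obtain ⟨α, hα0, hαn, hαgeo⟩ := exists_geodesicSeq hS (a : G) (b : G)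
  set nS := wordLength S ((a : G)⁻¹ * (b : G)) with hnS
  have hMorse : IsMorseSeq S α nS M :=
    (hStab.2.2 α nS hαgeo (hα0 ▸ a.2) (hαn ▸ b.2)).1
  -- the coerced sequences are S-quasigeodesic sequences
  have hdle : ∀ u v : ↥H, wordDist (Tset S H R) u v ≤ wordDist S (u : G) (v : G) :=
    dT_le_dS hS hStab hR
  have hdge : ∀ u v : ↥H, wordDist S (u : G) (v : G) ≤ (R : ℝ) * wordDist (Tset S H R) u v :=
    dS_le_R_dT hS hT
  have hσS : QGSeq (wordDist S) (fun i => ((σ i : ↥H) : G)) m (R * lam) (R * c) := by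
    intro i hi j hj
    obtain ⟨h1, h2⟩ := hσ i hi j hj
    constructor
    · have e1 : |(i : ℝ) - j| / (R * lam) ≤ |(i : ℝ) - j| / lam := by
        apply div_le_div_of_nonneg_left (abs_nonneg _) (by linarith)
        nlinarith
      have e2 : c ≤ R * c := by nlinarith
      calc |(i : ℝ) - j| / (R * lam) - R * c ≤ |(i : ℝ) - j| / lam - c := by linarith
        _ ≤ wordDist (Tset S H R) (σ i) (σ j) := h1
        _ ≤ wordDist S ((σ i : ↥H) : G) ((σ j : ↥H) : G) := hdle _ _
    · calc wordDist S ((σ i : ↥H) : G) ((σ j : ↥H) : G)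
          ≤ (R : ℝ) * wordDist (Tset S H R) (σ i) (σ j) := hdge _ _
        _ ≤ (R : ℝ) * (lam * |(i : ℝ) - j| + c) := by
            apply mul_le_mul_of_nonneg_left h2 (le_of_lt hR0)
        _ = R * lam * |(i : ℝ) - j| + R * c := by ring
  have hgS : QGSeq (wordDist S) (fun i => ((g i : ↥H) : G)) n₁ (R : ℝ) 0 := by
    intro i hi j hj
    have hgeo := hg i hi j hj
    constructor
    · have : |(i : ℝ) - j| / R ≤ |(i : ℝ) - j| := by
        apply div_le_self (abs_nonneg _) hR1
      calc |(i : ℝ) - j| / R - 0 ≤ |(i : ℝ) - j| := by linarith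
        _ = wordDist (Tset S H R) (g i) (g j) := hgeo.symm
        _ ≤ wordDist S ((g i : ↥H) : G) ((g j : ↥H) : G) := hdle _ _
    · calc wordDist S ((g i : ↥H) : G) ((g j : ↥H) : G)
          ≤ (R : ℝ) * wordDist (Tset S H R) (g i) (g j) := hdge _ _
        _ = (R : ℝ) * |(i : ℝ) - j| + 0 := by rw [hgeo]; ring
  -- apply the Morse property to the two interpolated paths
  have hq1 : IsQuasigeodesicOn (wordDist S) (fun t : ℝ => ((σ ⌊t⌋₊ : ↥H) : G))
      (Icc (0 : ℝ) m) (R * lam) (R * c + R * lam) :=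
    interp_qg _ (by nlinarith) hσS
  have hq2 : IsQuasigeodesicOn (wordDist S) (fun t : ℝ => ((g ⌊t⌋₊ : ↥H) : G))
      (Icc (0 : ℝ) n₁) (R : ℝ) (0 + R) :=
    interp_qg _ hR1 hgS
  have H1 := hMorse (R * lam) (R * c + R * lam) (by nlinarith) (by nlinarith)
    0 nS (Nat.zero_le _) le_rfl (fun t : ℝ => ((σ ⌊t⌋₊ : ↥H) : G)) 0 m
    (Nat.cast_nonneg _) hq1
    (by simp only [Nat.floor_zero]; exact hα0.symm)
    (by simp only [Nat.floor_natCast]; exact hαn.symm)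
  have H2 := hMorse (R : ℝ) (0 + R) hR1 (by linarith)
    0 nS (Nat.zero_le _) le_rfl (fun t : ℝ => ((g ⌊t⌋₊ : ↥H) : G)) 0 n₁
    (Nat.cast_nonneg _) hq2
    (by simp only [Nat.floor_zero]; rw [h0]; exact hα0.symm)
    (by simp only [Nat.floor_natCast]; rw [hn]; exact hαn.symm)
  rw [interp_image (fun i => ((σ i : ↥H) : G)) m] at H1
  rw [interp_image (fun i => ((g i : ↥H) : G)) n₁] at H2
  constructor
  · intro i hi
    obtain ⟨p, hp, hp1⟩ := H2.2 ((g i : ↥H) : G) ⟨i, hi, rfl⟩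
    obtain ⟨q, hq, hq1⟩ := H1.1 p hp
    obtain ⟨j, hj, rfl⟩ := hq
    refine ⟨j, hj, ?_⟩
    calc wordDist (Tset S H R) (g i) (σ j)
        ≤ wordDist S ((g i : ↥H) : G) ((σ j : ↥H) : G) := hdle _ _
      _ ≤ wordDist S ((g i : ↥H) : G) p + wordDist S p ((σ j : ↥H) : G) :=
          wordDist_triangle hS _ _ _
      _ ≤ M (R : ℝ) (0 + R) + M (R * lam) (R * c + R * lam) := by
          have e1 : wordDist S ((g i : ↥H) : G) p = wordDist S p ((g i : ↥H) : G) :=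
            wordDist_symm hS _ _
          rw [e1]
          exact add_le_add hp1 hq1
      _ = Kconst M R lam c := rfl
  · intro j hj
    obtain ⟨p, hp, hp1⟩ := H1.2 ((σ j : ↥H) : G) ⟨j, hj, rfl⟩
    obtain ⟨q, hq, hq1⟩ := H2.1 p hp
    obtain ⟨i, hi, rfl⟩ := hq
    refine ⟨i, hi, ?_⟩
    calc wordDist (Tset S H R) (g i) (σ j)
        ≤ wordDist S ((g i : ↥H) : G) ((σ j : ↥H) : G) := hdle _ _
      _ ≤ wordDist S ((g i : ↥H) : G) p + wordDist S p ((σ j : ↥H) : G) :=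
          wordDist_triangle hS _ _ _
      _ ≤ M (R : ℝ) (0 + R) + M (R * lam) (R * c + R * lam) := by
          have e1 : wordDist S ((g i : ↥H) : G) p = wordDist S p ((g i : ↥H) : G) :=
            wordDist_symm hS _ _
          rw [e1]
          exact add_le_add hq1 hp1
      _ = Kconst M R lam c := rfl
end L1
section L2
open Set

/-- A "geodesic corner from a nearest point" is a (3,0)-quasigeodesic sequence. -/
lemma corner_qgseq {K : Type*} [Group K] {U : Set K} (hU : Subgroup.closure U = ⊤)
    {σ : ℕ → K} {h m : ℕ} (hhm : h ≤ m)
    (hgeo1 : ∀ i ≤ h, ∀ j ≤ h, wordDist U (σ i) (σ j) = |(i : ℝ) - j|)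
    (hgeo2 : ∀ i, h ≤ i → i ≤ m → ∀ j, h ≤ j → j ≤ m →
      wordDist U (σ i) (σ j) = |(i : ℝ) - j|)
    (hmin : ∀ j, h ≤ j → j ≤ m → (h : ℝ) ≤ wordDist U (σ 0) (σ j)) :
    QGSeq (wordDist U) σ m 3 0 := by
  have main : ∀ i ≤ m, ∀ j ≤ m, i ≤ j →
      |(i : ℝ) - j| / 3 - 0 ≤ wordDist U (σ i) (σ j) ∧
        wordDist U (σ i) (σ j) ≤ 3 * |(i : ℝ) - j| + 0 := by
    intro i hi j hj hij
    have habs : |(i : ℝ) - j| = (j : ℝ) - i := by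
      rw [abs_sub_comm]
      exact abs_of_nonneg (sub_nonneg.mpr (by exact_mod_cast hij))
    rcases le_or_gt j h with hjh | hjh
    · have := hgeo1 i (hij.trans hjh) j hjh
      rw [this]
      constructor
      · have := abs_nonneg ((i : ℝ) - j); linarith [div_le_self (abs_nonneg ((i : ℝ) - j)) (by norm_num : (1:ℝ) ≤ 3)]
      · nlinarith [abs_nonneg ((i : ℝ) - j)]
    rcases le_or_gt h i with hhi | hhi
    · have := hgeo2 i hhi hi j (le_of_lt hjh) hj
      rw [this]
      constructor
      · linarith [div_le_self (abs_nonneg ((i : ℝ) - j)) (by norm_num : (1:ℝ) ≤ 3)]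
      · nlinarith [abs_nonneg ((i : ℝ) - j)]
    -- mixed case : i ≤ h ≤ j
    have hih : i ≤ h := le_of_lt hhi
    have hhj : h ≤ j := le_of_lt hjh
    have d1 : wordDist U (σ i) (σ h) = (h : ℝ) - i := by
      rw [hgeo1 i hih h le_rfl, abs_sub_comm]
      exact abs_of_nonneg (sub_nonneg.mpr (by exact_mod_cast hih))
    have d2 : wordDist U (σ h) (σ j) = (j : ℝ) - h := by
      rw [hgeo2 h le_rfl hhm j hhj hj, abs_sub_comm]
      exact abs_of_nonneg (sub_nonneg.mpr (by exact_mod_cast hhj))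
    have d0i : wordDist U (σ 0) (σ i) = (i : ℝ) := by
      rw [hgeo1 0 (Nat.zero_le _) i hih]
      simp
    have hup : wordDist U (σ i) (σ j) ≤ (j : ℝ) - i := by
      have := wordDist_triangle hU (σ i) (σ h) (σ j)
      rw [d1, d2] at this; linarith
    have hlow1 : (h : ℝ) - i ≤ wordDist U (σ i) (σ j) := by
      have ht := wordDist_triangle hU (σ 0) (σ i) (σ j)
      have hm0 := hmin j hhj hj
      rw [d0i] at ht; linarith
    have hlow2 : ((j : ℝ) - h) - ((h : ℝ) - i) ≤ wordDist U (σ i) (σ j) := by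
      have ht := wordDist_triangle hU (σ h) (σ i) (σ j)
      have e : wordDist U (σ h) (σ i) = (h : ℝ) - i := by
        rw [wordDist_symm hU]; exact d1
      rw [e, d2] at ht; linarith
    refine ⟨?_, ?_⟩
    · rw [habs]; linarith
    · rw [habs]; linarith
  intro i hi j hj
  rcases le_total i j with hij | hij
  · exact main i hi j hj hij
  · obtain ⟨l1, l2⟩ := main j hj i hi hij
    rw [wordDist_symm hU (σ j) (σ i), abs_sub_comm] at l1 l2
    exact ⟨l1, l2⟩

end L2
section Slim
open Set
variable {G : Type*} [Group G] {S : Set G} {H : Subgroup G} {M : ℝ → ℝ → ℝ} {μ : ℝ}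

/-- Slimness of `T`-geodesic triangles: each point on one side is `K₀`-close to the
union of the other two sides. -/
lemma slim_triangle (hS : Subgroup.closure S = ⊤)
    (hStab : IsStableSubgroupWith S H M μ) {R : ℕ} (hR : 2 * μ + 1 ≤ (R : ℝ))
    (hT : Subgroup.closure (Tset S H R) = ⊤)
    {z : ↥H} {α : ℕ → ↥H} {r : ℕ} (hα : IsGeodesicSeq (Tset S H R) α r)
    {g₁ : ℕ → ↥H} {n₁ : ℕ} (hg₁ : IsGeodesicSeq (Tset S H R) g₁ n₁)
    (hg₁0 : g₁ 0 = z) (hg₁n : g₁ n₁ = α 0)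
    {g₂ : ℕ → ↥H} {n₂ : ℕ} (hg₂ : IsGeodesicSeq (Tset S H R) g₂ n₂)
    (hg₂0 : g₂ 0 = z) (hg₂n : g₂ n₂ = α r) :
    ∀ i ≤ r, (∃ j ≤ n₁, wordDist (Tset S H R) (α i) (g₁ j) ≤ Kconst M R 3 0) ∨
      (∃ j ≤ n₂, wordDist (Tset S H R) (α i) (g₂ j) ≤ Kconst M R 3 0) := by
  classical
  set T := Tset S H R with hTdef
  -- the nearest index on α to z
  obtain ⟨s, hs_mem, hs_min⟩ := Finset.exists_min_image (Finset.range (r + 1))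
    (fun i => wordLength T (z⁻¹ * α i)) ⟨0, by simp⟩
  have hsr : s ≤ r := by simpa [Nat.lt_succ_iff] using hs_mem
  set h := wordLength T (z⁻¹ * α s) with hh
  have hmin : ∀ k ≤ r, (h : ℝ) ≤ wordDist T z (α k) := by
    intro k hk
    rw [wordDist_eq]
    exact_mod_cast hs_min k (by simp [Nat.lt_succ_iff, hk])
  obtain ⟨geo, hgeo0, hgeoh, hgeo⟩ := exists_geodesicSeq hT z (α s)
  intro i hir
  rcases le_total i s with his | his
  · -- use the path z → α s → α 0 and the geodesic g₁
    left
    set σ : ℕ → ↥H := fun k => if k ≤ h then geo k else α (s - (k - h)) with hσ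
    have hσval : ∀ k, h ≤ k → σ k = α (s - (k - h)) := by
      intro k hk
      simp only [hσ]
      rcases eq_or_lt_of_le hk with hkh | hkh
      · rw [← hkh]; simp [hgeoh]; exact hgeoh
      · rw [if_neg (by omega)]
    have hqg : QGSeq (wordDist T) σ (h + s) 3 0 := by
      apply corner_qgseq (h := h) hT (by omega)
      · intro a ha b hb
        simp only [hσ, if_pos ha, if_pos hb]
        exact hgeo a ha b hb
      · intro a ha ham b hb hbm
        rw [hσval a ha, hσval b hb]
        have e1 : a - h ≤ s := by omega
        have e2 : b - h ≤ s := by omega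
        have := hα (s - (a - h)) (by omega) (s - (b - h)) (by omega)
        rw [this]
        have c1 : ((s - (a - h) : ℕ) : ℝ) = (s : ℝ) - ((a : ℝ) - h) := by
          rw [Nat.cast_sub e1, Nat.cast_sub ha]
        have c2 : ((s - (b - h) : ℕ) : ℝ) = (s : ℝ) - ((b : ℝ) - h) := by
          rw [Nat.cast_sub e2, Nat.cast_sub hb]
        rw [c1, c2]
        have e : (s : ℝ) - ((a : ℝ) - h) - ((s : ℝ) - ((b : ℝ) - h)) = (b : ℝ) - a := by ring
        rw [e, abs_sub_comm]
      · intro j hj hjm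
        have h0 : σ 0 = z := by simp [hσ, hgeo0]
        rw [h0, hσval j hj]
        exact hmin _ (by omega)
    have hend0 : σ 0 = z := by simp [hσ, hgeo0]
    have hendm : σ (h + s) = α 0 := by
      rw [hσval (h + s) (by omega)]
      congr 1
      omega
    have hL1 := qg_near_geodesic hS hStab hR hT (by norm_num) (le_refl (0:ℝ))
      hqg hg₁ (by rw [hg₁0, hend0]) (by rw [hg₁n, hendm])
    have hαi : α i = σ (h + (s - i)) := by
      rw [hσval (h + (s - i)) (by omega)]
      congr 1
      omega
    obtain ⟨j, hj, hjd⟩ := hL1.2 (h + (s - i)) (by omega)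
    refine ⟨j, hj, ?_⟩
    rw [wordDist_symm hT, ← hαi] at hjd
    exact hjd
  · -- use the path z → α s → α r and the geodesic g₂
    right
    set σ : ℕ → ↥H := fun k => if k ≤ h then geo k else α (s + (k - h)) with hσ
    have hσval : ∀ k, h ≤ k → σ k = α (s + (k - h)) := by
      intro k hk
      simp only [hσ]
      rcases eq_or_lt_of_le hk with hkh | hkh
      · rw [← hkh]; simp [hgeoh]; exact hgeoh
      · rw [if_neg (by omega)]
    have hqg : QGSeq (wordDist T) σ (h + (r - s)) 3 0 := by
      apply corner_qgseq (h := h) hT (by omega)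
      · intro a ha b hb
        simp only [hσ, if_pos ha, if_pos hb]
        exact hgeo a ha b hb
      · intro a ha ham b hb hbm
        rw [hσval a ha, hσval b hb]
        have := hα (s + (a - h)) (by omega) (s + (b - h)) (by omega)
        rw [this]
        have c1 : ((s + (a - h) : ℕ) : ℝ) = (s : ℝ) + ((a : ℝ) - h) := by
          rw [Nat.cast_add, Nat.cast_sub ha]
        have c2 : ((s + (b - h) : ℕ) : ℝ) = (s : ℝ) + ((b : ℝ) - h) := by
          rw [Nat.cast_add, Nat.cast_sub hb]
        rw [c1, c2]
        congr 1
        ring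
      · intro j hj hjm
        have h0 : σ 0 = z := by simp [hσ, hgeo0]
        rw [h0, hσval j hj]
        exact hmin _ (by omega)
    have hend0 : σ 0 = z := by simp [hσ, hgeo0]
    have hendm : σ (h + (r - s)) = α r := by
      rw [hσval (h + (r - s)) (by omega)]
      congr 1
      omega
    have hL1 := qg_near_geodesic hS hStab hR hT (by norm_num) (le_refl (0:ℝ))
      hqg hg₂ (by rw [hg₂0, hend0]) (by rw [hg₂n, hendm])
    have hαi : α i = σ (h + (i - s)) := by
      rw [hσval (h + (i - s)) (by omega)]
      congr 1
      omega
    obtain ⟨j, hj, hjd⟩ := hL1.2 (h + (i - s)) (by omega)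
    refine ⟨j, hj, ?_⟩
    rw [wordDist_symm hT, ← hαi] at hjd
    exact hjd
end Slim
section FourPoint
open Set
variable {G : Type*} [Group G] {S : Set G} {H : Subgroup G} {M : ℝ → ℝ → ℝ} {μ : ℝ}

lemma four_point (hS : Subgroup.closure S = ⊤)
    (hStab : IsStableSubgroupWith S H M μ) {R : ℕ} (hR : 2 * μ + 1 ≤ (R : ℝ))
    (hT : Subgroup.closure (Tset S H R) = ⊤) (w x y z : ↥H) :
    min (gromovProd (wordDist (Tset S H R)) w x z)
        (gromovProd (wordDist (Tset S H R)) w z y)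
      - (3 * Kconst M R 3 0 + 1) ≤ gromovProd (wordDist (Tset S H R)) w x y := by
  classical
  set T := Tset S H R with hTdef
  set K₀ := Kconst M R 3 0 with hK₀def
  set d := wordDist T with hd
  have dsym : ∀ u v : ↥H, d u v = d v u := fun u v => wordDist_symm hT u v
  have dtri : ∀ u v p : ↥H, d u p ≤ d u v + d v p := fun u v p => wordDist_triangle hT u v p
  -- geodesics
  obtain ⟨α, hα0, hαr, hαg⟩ := exists_geodesicSeq hT x y
  set r := wordLength T (x⁻¹ * y) with hrdef
  have dxy : d x y = (r : ℝ) := rfl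
  obtain ⟨gw1, hgw10, hgw1n, hgw1⟩ := exists_geodesicSeq hT w x
  set n₁ := wordLength T (w⁻¹ * x) with hn₁def
  have dwx : d w x = (n₁ : ℝ) := rfl
  obtain ⟨gw2, hgw20, hgw2n, hgw2⟩ := exists_geodesicSeq hT w y
  set n₂ := wordLength T (w⁻¹ * y) with hn₂def
  have dwy : d w y = (n₂ : ℝ) := rfl
  obtain ⟨gz1, hgz10, hgz1n, hgz1⟩ := exists_geodesicSeq hT z x
  set m₁ := wordLength T (z⁻¹ * x) with hm₁def
  have dzx : d z x = (m₁ : ℝ) := rfl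
  obtain ⟨gz2, hgz20, hgz2n, hgz2⟩ := exists_geodesicSeq hT z y
  set m₂ := wordLength T (z⁻¹ * y) with hm₂def
  have dzy : d z y = (m₂ : ℝ) := rfl
  -- the special point on α
  set gpr := gromovProd d x w y with hgprdef
  have hgpr : gpr = (d x w + d x y - d w y) / 2 := rfl
  have hgpr0 : 0 ≤ gpr := by
    have := dtri w x y
    have e := dsym w x
    rw [hgpr]; linarith
  have hgprr : gpr ≤ (r : ℝ) := by
    have := dtri x y w
    have e1 := dsym y w
    rw [hgpr, ← dxy]; linarith
  set t₀ := ⌊gpr⌋₊ with ht₀def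
  have ht₀le : (t₀ : ℝ) ≤ gpr := Nat.floor_le hgpr0
  have ht₀ge : gpr ≤ (t₀ : ℝ) + 1 := le_of_lt (Nat.lt_floor_add_one gpr)
  have ht₀r : t₀ ≤ r := by
    have : (t₀ : ℝ) ≤ (r : ℝ) := le_trans ht₀le hgprr
    exact_mod_cast this
  have dxp : d x (α t₀) = (t₀ : ℝ) := by
    have h' := hαg 0 (Nat.zero_le _) t₀ ht₀r
    rw [hα0] at h'
    rw [hd, h']; simp
  have dpy : d (α t₀) y = (r : ℝ) - (t₀ : ℝ) := by
    have h' := hαg t₀ ht₀r r le_rfl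
    rw [hαr] at h'
    rw [hd, h', abs_sub_comm]
    exact abs_of_nonneg (sub_nonneg.mpr (by exact_mod_cast ht₀r))
  -- step (b)
  have step_b : d w (α t₀) ≤ gromovProd d w x y + 2 * K₀ + 1 := by
    have hgp : gromovProd d w x y = (d w x + d w y - d x y) / 2 := rfl
    have hslim := slim_triangle hS hStab hR hT hαg hgw1 hgw10
      (by rw [hgw1n, hα0]) hgw2 hgw20 (by rw [hgw2n, hαr]) t₀ ht₀r
    rcases hslim with ⟨j, hj, hdj⟩ | ⟨j, hj, hdj⟩
    · rw [← hTdef, ← hd, ← hK₀def] at hdj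
      set q := gw1 j with hq
      have dwq : d w q = (j : ℝ) := by
        have h' := hgw1 0 (Nat.zero_le _) j hj
        rw [hgw10] at h'
        rw [hd, h']; simp
      have dqx : d q x = (n₁ : ℝ) - (j : ℝ) := by
        have h' := hgw1 j hj n₁ le_rfl
        rw [hgw1n] at h'
        rw [hd, h', abs_sub_comm]
        exact abs_of_nonneg (sub_nonneg.mpr (by exact_mod_cast hj))
      have e1 : d q (α t₀) ≤ K₀ := by rw [dsym]; exact hdj
      have h1 : (t₀ : ℝ) ≤ d q x + K₀ := by
        have t' := dtri x q (α t₀)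
        have e2 : d x q = d q x := dsym x q
        linarith [dxp ▸ t']
      have h2 : d w (α t₀) ≤ (j : ℝ) + K₀ := by
        have t' := dtri w q (α t₀)
        linarith [t', e1, dwq]
      have hj1 : (j : ℝ) = d w x - d q x := by rw [dwx, dqx]; ring
      have e5 : d x w = d w x := dsym x w
      rw [hgp]
      rw [hgpr] at ht₀ge
      linarith [h1, h2, hj1, ht₀ge, e5, dxy]
    · rw [← hTdef, ← hd, ← hK₀def] at hdj
      set q := gw2 j with hq
      have dwq : d w q = (j : ℝ) := by
        have h' := hgw2 0 (Nat.zero_le _) j hj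
        rw [hgw20] at h'
        rw [hd, h']; simp
      have dqy : d q y = (n₂ : ℝ) - (j : ℝ) := by
        have h' := hgw2 j hj n₂ le_rfl
        rw [hgw2n] at h'
        rw [hd, h', abs_sub_comm]
        exact abs_of_nonneg (sub_nonneg.mpr (by exact_mod_cast hj))
      have e1 : d q (α t₀) ≤ K₀ := by rw [dsym]; exact hdj
      have h1 : (r : ℝ) - (t₀ : ℝ) ≤ d q y + K₀ := by
        have t' := dtri (α t₀) q y
        linarith [t', hdj, dpy ▸ le_refl (d (α t₀) y), dpy]
      have h2 : d w (α t₀) ≤ (j : ℝ) + K₀ := by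
        have t' := dtri w q (α t₀)
        linarith [t', e1, dwq]
      have h3 : (j : ℝ) = d w y - d q y := by rw [dwy, dqy]; ring
      have e5 : d x w = d w x := dsym x w
      rw [hgp]
      rw [hgpr] at ht₀le
      linarith [h1, h2, h3, ht₀le, e5, dxy]
  -- step (c)
  have hslimz := slim_triangle hS hStab hR hT hαg hgz1 hgz10
    (by rw [hgz1n, hα0]) hgz2 hgz20 (by rw [hgz2n, hαr]) t₀ ht₀r
  rcases hslimz with ⟨j, hj, hdj⟩ | ⟨j, hj, hdj⟩
  · rw [← hTdef, ← hd, ← hK₀def] at hdj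
    set q := gz1 j with hq
    have dzq : d z q = (j : ℝ) := by
      have h' := hgz1 0 (Nat.zero_le _) j hj
      rw [hgz10] at h'
      rw [hd, h']; simp
    have dqx : d q x = (m₁ : ℝ) - (j : ℝ) := by
      have h' := hgz1 j hj m₁ le_rfl
      rw [hgz1n] at h'
      rw [hd, h', abs_sub_comm]
      exact abs_of_nonneg (sub_nonneg.mpr (by exact_mod_cast hj))
    have key : gromovProd d w x z ≤ d w q := by
      have hgp : gromovProd d w x z = (d w x + d w z - d x z) / 2 := rfl
      have t1 : d w x ≤ d w q + d q x := dtri w q x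
      have t2 : d w z ≤ d w q + d q z := dtri w q z
      have e1 : d q z = d z q := dsym q z
      have e2 : d x z = d z x := dsym x z
      rw [hgp]
      have e3 : d q x + d z q = d z x := by rw [dqx, dzq, dzx]; ring
      linarith
    have final : gromovProd d w x z ≤ gromovProd d w x y + 3 * K₀ + 1 := by
      have t1 : d w q ≤ d w (α t₀) + d (α t₀) q := dtri w (α t₀) q
      linarith [key, t1, hdj, step_b]
    have hmin := min_le_left (gromovProd d w x z) (gromovProd d w z y)
    linarith
  · rw [← hTdef, ← hd, ← hK₀def] at hdj
    set q := gz2 j with hq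
    have dzq : d z q = (j : ℝ) := by
      have h' := hgz2 0 (Nat.zero_le _) j hj
      rw [hgz20] at h'
      rw [hd, h']; simp
    have dqy : d q y = (m₂ : ℝ) - (j : ℝ) := by
      have h' := hgz2 j hj m₂ le_rfl
      rw [hgz2n] at h'
      rw [hd, h', abs_sub_comm]
      exact abs_of_nonneg (sub_nonneg.mpr (by exact_mod_cast hj))
    have key : gromovProd d w z y ≤ d w q := by
      have hgp : gromovProd d w z y = (d w z + d w y - d z y) / 2 := rfl
      have t1 : d w z ≤ d w q + d q z := dtri w q z
      have t2 : d w y ≤ d w q + d q y := dtri w q y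
      have e1 : d q z = d z q := dsym q z
      rw [hgp]
      have e3 : d z q + d q y = d z y := by rw [dqy, dzq, dzy]; ring
      linarith
    have final : gromovProd d w z y ≤ gromovProd d w x y + 3 * K₀ + 1 := by
      have t1 : d w q ≤ d w (α t₀) + d (α t₀) q := dtri w (α t₀) q
      linarith [key, t1, hdj, step_b]
    have hmin := min_le_right (gromovProd d w x z) (gromovProd d w z y)
    linarith
end FourPoint

/-- **Lemma.** A stable subgroup of a finitely generated group is a hyperbolic
group. -/
theorem stable_is_hyperbolic {G : Type*} [Group G] (hFG : Group.FG G)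
    (H : Subgroup G) (hH : IsStableSubgroup H) :
    IsHyperbolicGroup H := by
  obtain ⟨S, ⟨hSfin, hS⟩, M, μ, hStab⟩ := hH
  have hμ : 0 ≤ μ := hStab.2.1
  have hM : IsMorseGauge M := hStab.1
  set R := ⌈2 * μ + 1⌉₊ with hRdef
  have hR : 2 * μ + 1 ≤ (R : ℝ) := Nat.le_ceil _
  have hT : Subgroup.closure (Tset S H R) = ⊤ := Tset_closure hS hStab hR
  have hTfin : (Tset S H R).Finite := Tset_finite hS hSfin R
  have hR1 : (1 : ℝ) ≤ (R : ℝ) := by linarith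
  have hK₀ : 0 ≤ Kconst M R 3 0 := by
    have h1 := hM.1 (R : ℝ) (0 + (R : ℝ)) hR1 (by linarith)
    have h2 := hM.1 ((R : ℝ) * 3) ((R : ℝ) * 0 + (R : ℝ) * 3) (by nlinarith) (by nlinarith)
    rw [Kconst]
    exact add_nonneg h1 h2
  refine ⟨Group.fg_iff.mpr ⟨Tset S H R, hT, hTfin⟩, Tset S H R, ⟨hTfin, hT⟩,
    3 * Kconst M R 3 0 + 1, by linarith, ?_⟩
  intro x y z w
  exact four_point hS hStab hR hT w x y z
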